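/- Let p be prime and N ∈ pℕ with N > 0. The probability that a uniformly random matrix H ∈ M_{2×N}(μ_p) has orthogonal rows equals (1/p^N) · N! / ((N/p)!)^p. -/

import Mathlib

/-!
Since `conj z = z⁻¹` on `μ_p`, the map `H ↦ (H 1, H 0 * conj (H 1))` identifies matrices with
orthogonal rows with pairs `(v, w)` of vectors in `μ_p^N` where `∑ j, w j = 0`. Writing
`w j = ζ ^ f j` for a primitive root `ζ`, that sum is `∑ i, c i ζ ^ i` with `c i` the fibre sizes of
`f`; it vanishes iff the cyclotomic polynomial `1 + X + ⋯ + X ^ (p - 1)`, the minimal polynomial of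
`ζ`, divides `∑ i, c i X ^ i`, i.e. iff all fibres have size `N / p`. Such `f` form a single orbit
of `Perm (Fin N)` with stabilizer `∏ i, Perm (f ⁻¹' {i})`, giving the multinomial count.
-/

open Equiv MulAction Polynomial Nat

section FiberCard

variable {α β : Type*} [Finite α]

theorem exists_perm_comp_eq_of_card_fiber_eq {f g : α → β}
    (h : ∀ b, Nat.card {a // f a = b} = Nat.card {a // g a = b}) :
    ∃ σ : Perm α, g ∘ σ = f := by
  have e : ∀ b, {a // f a = b} ≃ {a // g a = b} := fun b => (Finite.card_eq.mp (h b)).some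
  exact ⟨(sigmaFiberEquiv f).symm.trans ((sigmaCongrRight e).trans (sigmaFiberEquiv g)),
    funext fun a => (e (f a) ⟨a, rfl⟩).2⟩

theorem DomMulAct.mem_orbit_iff_card_fiber_eq {f₀ f : α → β} :
    f ∈ orbit (Perm α)ᵈᵐᵃ f₀ ↔ ∀ b, Nat.card {a // f a = b} = Nat.card {a // f₀ a = b} := by
  constructor
  · rintro ⟨σ, rfl⟩ b
    exact Nat.card_congr ((mk.symm σ).subtypeEquiv fun _ => Iff.rfl)
  · intro h
    obtain ⟨σ, hσ⟩ := exists_perm_comp_eq_of_card_fiber_eq h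
    exact ⟨mk σ, hσ⟩

theorem DomMulAct.natCard_stabilizer [Fintype β] (f : α → β) :
    Nat.card (stabilizer (Perm α)ᵈᵐᵃ f) = ∏ b, (Nat.card {a // f a = b})! := by
  rw [Nat.card_congr MulOpposite.opEquiv, Nat.card_congr (stabilizerMulEquiv f).toEquiv,
    Nat.card_pi]
  simp only [Nat.card_perm]

theorem exists_card_fiber_eq [Fintype β] (n : β → ℕ) (hn : ∑ b, n b = Nat.card α) :
    ∃ f : α → β, ∀ b, Nat.card {a // f a = b} = n b := by
  obtain ⟨e⟩ : Nonempty ((Σ b, Fin (n b)) ≃ α) := Finite.card_eq.mp (by simp [hn])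
  refine ⟨fun a => (e.symm a).1, fun b => ?_⟩
  rw [← Nat.card_fin (n b)]
  exact Nat.card_congr ((e.symm.subtypeEquiv fun _ => Iff.rfl).trans (sigmaSubtype b))

theorem card_fun_card_fiber_eq_mul_prod_factorial [Fintype β] (n : β → ℕ)
    (hn : ∑ b, n b = Nat.card α) :
    Nat.card {f : α → β // ∀ b, Nat.card {a // f a = b} = n b} * ∏ b, (n b)! = (Nat.card α)! := by
  obtain ⟨f₀, hf₀⟩ := exists_card_fiber_eq n hn
  have horbit : {f : α → β // ∀ b, Nat.card {a // f a = b} = n b} ≃ orbit (Perm α)ᵈᵐᵃ f₀ :=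
    subtypeEquivRight fun f => by simp only [DomMulAct.mem_orbit_iff_card_fiber_eq, hf₀]
  simp_rw [Nat.card_congr horbit, ← hf₀, ← DomMulAct.natCard_stabilizer, ← Nat.card_prod,
    Nat.card_congr (orbitProdStabilizerEquivGroup _ f₀), Nat.card_congr DomMulAct.mk.symm,
    Nat.card_perm]

end FiberCard

namespace IsPrimitiveRoot

section Domain

variable {R : Type*} [CommRing R] [IsDomain R] {ζ : R} {k : ℕ} [NeZero k]

noncomputable def finEquivPowEqOne (hζ : IsPrimitiveRoot ζ k) : Fin k ≃ {z : R // z ^ k = 1} :=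
  Equiv.ofBijective (fun i => ⟨ζ ^ (i : ℕ), by rw [pow_right_comm, hζ.pow_eq_one, one_pow]⟩)
    ⟨fun i j h => Fin.ext (hζ.pow_inj i.2 j.2 (congrArg Subtype.val h)), fun z =>
      let ⟨i, hi, hz⟩ := hζ.eq_pow_of_pow_eq_one z.2; ⟨⟨i, hi⟩, Subtype.ext hz⟩⟩

theorem card_fun_pow_eq_one (hζ : IsPrimitiveRoot ζ k) (α : Type*) [Fintype α] :
    Nat.card {w : α → R // ∀ a, w a ^ k = 1} = k ^ Fintype.card α := by
  rw [Nat.card_congr (subtypePiEquivPi.trans (piCongrRight fun _ => hζ.finEquivPowEqOne.symm)),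
    Nat.card_fun, Nat.card_fin, Nat.card_eq_fintype_card]

theorem card_vanishing_sum_eq (hζ : IsPrimitiveRoot ζ k) (α : Type*) [Fintype α] :
    Nat.card {w : α → R // (∀ a, w a ^ k = 1) ∧ ∑ a, w a = 0} =
      Nat.card {f : α → Fin k // ∑ a, ζ ^ (f a : ℕ) = 0} := by
  let e : (α → Fin k) ≃ {w : α → R // ∀ a, w a ^ k = 1} :=
    (piCongrRight fun _ => hζ.finEquivPowEqOne).trans subtypePiEquivPi.symm
  rw [← Nat.card_congr (subtypeSubtypeEquivSubtypeInter _ _)]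
  exact Nat.card_congr (e.subtypeEquiv fun _ => Iff.rfl).symm

end Domain

variable {K : Type*} [Field K] [CharZero K] {ζ : K} {p : ℕ} [hp : Fact p.Prime]

theorem sum_smul_pow_eq_zero_iff (hζ : IsPrimitiveRoot ζ p) (c : Fin p → ℚ) :
    ∑ i, c i • ζ ^ (i : ℕ) = 0 ↔ ∀ i j, c i = c j := by
  constructor
  · intro h
    set P : ℚ[X] := ∑ i : Fin p, C (c i) * X ^ (i : ℕ)
    have hdvd : cyclotomic p ℚ ∣ P := by
      rw [cyclotomic_eq_minpoly_rat hζ hp.out.pos]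
      exact minpoly.dvd ℚ ζ (by simpa [P, Algebra.smul_def] using h)
    have hdeg : P.natDegree ≤ (cyclotomic p ℚ).natDegree := by
      rw [natDegree_cyclotomic, totient_prime hp.out]
      refine natDegree_sum_le_of_forall_le _ _ fun i _ => (natDegree_C_mul_X_pow_le _ _).trans ?_
      omega
    have hP := eq_leadingCoeff_mul_of_monic_of_dvd_of_natDegree_le (cyclotomic.monic p ℚ) hdvd hdeg
    have hc : ∀ i : Fin p, c i = P.leadingCoeff := fun i => by
      simpa [P, cyclotomic_prime, coeff_X_pow, Fin.val_inj] using congrArg (coeff · i) hP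
    exact fun i j => (hc i).trans (hc j).symm
  · intro h
    have : NeZero p := ⟨hp.out.ne_zero⟩
    rw [Finset.sum_congr rfl fun i _ => by rw [h i 0], ← Finset.smul_sum,
      Fin.sum_univ_eq_sum_range (ζ ^ ·), hζ.geom_sum_eq_zero hp.out.one_lt, smul_zero]

theorem sum_pow_comp_eq_zero_iff (hζ : IsPrimitiveRoot ζ p) {α : Type*} [Fintype α]
    (f : α → Fin p) :
    ∑ a, ζ ^ (f a : ℕ) = 0 ↔ ∀ i, Nat.card {a // f a = i} = Nat.card α / p := by
  have hsum : ∑ a, ζ ^ (f a : ℕ) = ∑ i, (Nat.card {a // f a = i} : ℚ) • ζ ^ (i : ℕ) := by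
    rw [← Fintype.sum_fiberwise' f (fun i : Fin p => ζ ^ (i : ℕ))]
    simp only [Finset.sum_const, Finset.card_univ, Nat.card_eq_fintype_card, Nat.cast_smul_eq_nsmul]
  have htotal : ∑ i, Nat.card {a // f a = i} = Nat.card α := by
    rw [← Nat.card_sigma, Nat.card_congr (sigmaFiberEquiv f)]
  rw [hsum, hζ.sum_smul_pow_eq_zero_iff]
  constructor
  · intro h i
    have : ∑ j, Nat.card {a // f a = j} = p * Nat.card {a // f a = i} := by
      rw [Finset.sum_congr rfl fun j _ => Nat.cast_inj.mp (h j i), Finset.sum_const,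
        Finset.card_univ, Fintype.card_fin, smul_eq_mul]
    rw [← htotal, this, Nat.mul_div_cancel_left _ hp.out.pos]
  · intro h i j
    rw [h i, h j]

theorem card_vanishing_sum_mul_factorial (hζ : IsPrimitiveRoot ζ p) {α : Type*} [Fintype α]
    (hα : p ∣ Nat.card α) :
    Nat.card {f : α → Fin p // ∑ a, ζ ^ (f a : ℕ) = 0} * ((Nat.card α / p)!) ^ p =
      (Nat.card α)! := by
  have := card_fun_card_fiber_eq_mul_prod_factorial (α := α) (fun _ : Fin p => Nat.card α / p)
    (by rw [Finset.sum_const, Finset.card_univ, Fintype.card_fin, smul_eq_mul,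
      Nat.mul_div_cancel' hα])
  rwa [Finset.prod_const, Finset.card_univ, Fintype.card_fin,
    ← Nat.card_congr (subtypeEquivRight fun f => hζ.sum_pow_comp_eq_zero_iff f)] at this

end IsPrimitiveRoot

open ComplexConjugate

theorem Complex.mul_conj_eq_one_of_pow_eq_one {z : ℂ} {n : ℕ} (h : z ^ n = 1) (hn : n ≠ 0) :
    z * conj z = 1 := by
  rw [Complex.mul_conj, Complex.normSq_eq_norm_sq, Complex.norm_eq_one_of_pow_eq_one h hn]
  simp

def orthogonalRowsEquiv {n : ℕ} (hn : n ≠ 0) (ι : Type*) [Fintype ι] :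
    {H : Matrix (Fin 2) ι ℂ // (∀ i j, H i j ^ n = 1) ∧ ∑ j, H 0 j * conj (H 1 j) = 0} ≃
      {v : ι → ℂ // ∀ j, v j ^ n = 1} × {w : ι → ℂ // (∀ j, w j ^ n = 1) ∧ ∑ j, w j = 0} where
  toFun H := (⟨H.1 1, H.2.1 1⟩, ⟨fun j => H.1 0 j * conj (H.1 1 j),
    fun j => by simp only [mul_pow, ← map_pow, H.2.1, map_one, mul_one], H.2.2⟩)
  invFun vw := ⟨Matrix.of ![fun j => vw.2.1 j * vw.1.1 j, vw.1.1], by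
    refine ⟨Fin.forall_fin_two.mpr ⟨fun j => ?_, vw.1.2⟩, ?_⟩
    · simp [mul_pow, vw.2.2.1 j, vw.1.2 j]
    · simp [mul_assoc, Complex.mul_conj_eq_one_of_pow_eq_one (vw.1.2 _) hn, vw.2.2.2]⟩
  left_inv H := by
    ext i j
    fin_cases i
    · simp [mul_assoc, mul_comm (conj _), Complex.mul_conj_eq_one_of_pow_eq_one (H.2.1 1 j) hn]
    · simp
  right_inv vw := by
    ext j
    · rfl
    · simp [mul_assoc, Complex.mul_conj_eq_one_of_pow_eq_one (vw.1.2 j) hn]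

theorem stmt_19_general (p N : ℕ) (hp : p.Prime) (hN : p ∣ N) :
    (Nat.card {H : Matrix (Fin 2) (Fin N) ℂ //
        (∀ i j, H i j ^ p = 1) ∧
        ∑ j, H 0 j * (starRingEnd ℂ) (H 1 j) = 0} : ℝ) / p ^ (2 * N) =
      (1 / p ^ N) * ((N.factorial : ℝ) / ((N / p).factorial : ℝ) ^ p) := by
  have := Fact.mk hp
  have hζ := Complex.isPrimitiveRoot_exp p hp.ne_zero
  have hvanishing := hζ.card_vanishing_sum_mul_factorial (α := Fin N) (by simpa using hN)
  rw [← hζ.card_vanishing_sum_eq, Nat.card_fin] at hvanishing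
  rw [Nat.card_congr (orthogonalRowsEquiv hp.ne_zero (Fin N)), Nat.card_prod,
    hζ.card_fun_pow_eq_one, Fintype.card_fin, ← hvanishing, two_mul, pow_add]
  have : (p : ℝ) ≠ 0 := by exact_mod_cast hp.ne_zero
  push_cast
  field_simp

theorem stmt_19 (p N : ℕ) (hp : p.Prime) (hN : p ∣ N) (hN0 : 0 < N) :
    (Nat.card {H : Matrix (Fin 2) (Fin N) ℂ //
        (∀ i j, H i j ^ p = 1) ∧
        ∑ j, H 0 j * (starRingEnd ℂ) (H 1 j) = 0} : ℝ) / p ^ (2 * N) =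
      (1 / p ^ N) * ((N.factorial : ℝ) / ((N / p).factorial : ℝ) ^ p) :=
  stmt_19_general p N hp hN
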